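/- arXiv:math/0506512 — 3 statements merged into one kernel-verified Lean document; each statement's English description precedes it below -/
import Mathlib

section
/- Let U be an open subset of ℝ^d, μ a measure on U, and f a map from U to ℝ^n. Take v ≥ n, and suppose that for μ-almost every x₀ ∈ U one can find a ball B ⊂ U centered at x₀ such that for every γ > γ(v) one has Σ_{t=1}^∞ μ({x ∈ B : there exists q ∈ ℤ^{n+1} \ {0} with ‖g_t u_{f(x)} q‖ < 2^{-γt}}) < ∞. Then ω(f_*μ) ≤ v. -/
open MeasureTheory Metric Set Filter ENNReal

noncomputable section

namespace DK

/-- The (topological) support of a measure: points all of whose neighborhoods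
have positive measure. -/
def msupp {E : Type*} [TopologicalSpace E] [MeasurableSpace E] (μ : Measure E) : Set E :=
  {x | ∀ s ∈ nhds x, μ s ≠ 0}

/-- The sup-norm of an integer vector, as a real number. -/
def inorm {n : ℕ} (q : Fin n → ℤ) : ℝ := ‖(fun i => (q i : ℝ) : Fin n → ℝ)‖

/-- `y ∈ ℝⁿ` (viewed as a row vector / linear form) is `v`-approximable if there are
infinitely many integer vectors `q` such that `|y·q + p| < ‖q‖^{-v}` for some `p ∈ ℤ`. -/
def vApprox {n : ℕ} (v : ℝ) (y : Fin n → ℝ) : Prop :=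
  {q : Fin n → ℤ | ∃ p : ℤ, |(∑ i, y i * (q i : ℝ)) + (p : ℝ)| < inorm q ^ (-v)}.Infinite

/-- The Diophantine exponent `ω(y)`: the supremum of `v` such that `y` is `v`-approximable
(as an extended nonnegative real). -/
def diophExp {n : ℕ} (y : Fin n → ℝ) : ℝ≥0∞ :=
  sSup {e : ℝ≥0∞ | ∃ v : ℝ, 0 < v ∧ e = ENNReal.ofReal v ∧ vApprox v y}

/-- The Diophantine exponent `ω(ν)` of a measure `ν` on `ℝⁿ`:
`sup {v | ν({y | y is v-approximable}) > 0}`. -/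
def measDiophExp {n : ℕ} (ν : Measure (Fin n → ℝ)) : ℝ≥0∞ :=
  sSup {e : ℝ≥0∞ | ∃ v : ℝ, 0 < v ∧ e = ENNReal.ofReal v ∧ 0 < ν {y | vApprox v y}}

/-- `Π₊(q) = ∏_{qᵢ ≠ 0} |qᵢ|`. -/
def piPlus {n : ℕ} (q : Fin n → ℤ) : ℝ := ∏ i, if q i = 0 then 1 else |(q i : ℝ)|

/-- `y ∈ ℝⁿ` is `v`-multiplicatively approximable if there are infinitely many `q ∈ ℤⁿ`
with `|y·q + p| < Π₊(q)^{-v/n}` for some `p ∈ ℤ`. -/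
def vMultApprox {n : ℕ} (v : ℝ) (y : Fin n → ℝ) : Prop :=
  {q : Fin n → ℤ | ∃ p : ℤ, |(∑ i, y i * (q i : ℝ)) + (p : ℝ)| < piPlus q ^ (-(v / n))}.Infinite

/-- The multiplicative Diophantine exponent `ω^×(y)`. -/
def diophExpMult {n : ℕ} (y : Fin n → ℝ) : ℝ≥0∞ :=
  sSup {e : ℝ≥0∞ | ∃ v : ℝ, 0 < v ∧ e = ENNReal.ofReal v ∧ vMultApprox v y}

/-- The multiplicative Diophantine exponent `ω^×(ν)` of a measure on `ℝⁿ`. -/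
def measDiophExpMult {n : ℕ} (ν : Measure (Fin n → ℝ)) : ℝ≥0∞ :=
  sSup {e : ℝ≥0∞ | ∃ v : ℝ, 0 < v ∧ e = ENNReal.ofReal v ∧ 0 < ν {y | vMultApprox v y}}

/-- `g_t = diag(2^{nt}, 2^{-t}, …, 2^{-t})`. -/
def gMat (n : ℕ) (t : ℝ) : Matrix (Fin (n + 1)) (Fin (n + 1)) ℝ :=
  Matrix.diagonal (fun i => if i = 0 then (2 : ℝ) ^ ((n : ℝ) * t) else (2 : ℝ) ^ (-t))

/-- `u_y`: first row `(1, y₁, …, yₙ)`, identity `n × n` block in the lower right,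
zeros elsewhere. -/
def uMat {n : ℕ} (y : Fin n → ℝ) : Matrix (Fin (n + 1)) (Fin (n + 1)) ℝ :=
  Matrix.of fun i j =>
    if i = 0 then (if h : j = 0 then (1 : ℝ) else y (j.pred h))
    else if j = i then 1 else 0

/-- The sup-norm of the vector `g_t u_y q ∈ ℝ^{n+1}`, for an integer vector `q`. -/
def latNorm {n : ℕ} (t : ℝ) (y : Fin n → ℝ) (q : Fin (n + 1) → ℤ) : ℝ :=
  ‖(gMat n t * uMat y).mulVec (fun i => (q i : ℝ))‖

/-- `γ(v) = (v - n)/(n(v + 1))`. -/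
def gammaExp (n : ℕ) (v : ℝ) : ℝ := (v - (n : ℝ)) / ((n : ℝ) * (v + 1))

/-- `sup_{x ∈ s} |h x|`. -/
def supOn {d : ℕ} (h : (Fin d → ℝ) → ℝ) (s : Set (Fin d → ℝ)) : ℝ :=
  sSup ((fun x => |h x|) '' s)

/-- `h` is `(C, α)`-good on `V` with respect to `μ`: for every open ball `B ⊆ V`
centered in `supp μ` and every `ε > 0`,
`μ {z ∈ B | |h z| < ε} ≤ C (ε / ‖h‖_{μ,B})^α μ(B)`. -/
def IsGoodOn {d : ℕ} (C α : ℝ) (μ : Measure (Fin d → ℝ)) (V : Set (Fin d → ℝ))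
    (h : (Fin d → ℝ) → ℝ) : Prop :=
  ∀ (x : Fin d → ℝ) (r : ℝ), 0 < r → x ∈ msupp μ → ball x r ⊆ V → ∀ ε : ℝ, 0 < ε →
    μ {z ∈ ball x r | |h z| < ε} ≤
      ENNReal.ofReal (C * (ε / supOn h (ball x r ∩ msupp μ)) ^ α) * μ (ball x r)

/-- The affine combination `z ↦ c₀ + ∑ᵢ cᵢ fᵢ(z)` of `1, f₁, …, fₙ`. -/
def affComb {d n : ℕ} (c : Fin (n + 1) → ℝ) (f : (Fin d → ℝ) → (Fin n → ℝ)) :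
    (Fin d → ℝ) → ℝ :=
  fun z => c 0 + ∑ i : Fin n, c i.succ * f z i

/-- `f` is `μ`-good at `x` (relative to `U`): there are a neighborhood `V ⊆ U` of `x` and
`C, α > 0` such that every linear combination `c₀ + ∑ cᵢ fᵢ` is `(C, α)`-good on `V`
with respect to `μ`. -/
def MuGoodAt {d n : ℕ} (μ : Measure (Fin d → ℝ)) (U : Set (Fin d → ℝ))
    (f : (Fin d → ℝ) → (Fin n → ℝ)) (x : Fin d → ℝ) : Prop :=
  ∃ V ∈ nhds x, V ⊆ U ∧ ∃ C > 0, ∃ α > 0,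
    ∀ c : Fin (n + 1) → ℝ, IsGoodOn C α μ V (affComb c f)

/-- `f` is `μ`-nonplanar at `x`: for every neighborhood `B` of `x`, the image
`f(B ∩ supp μ)` is not contained in any proper affine subspace of `ℝⁿ`. -/
def MuNonplanarAt {d n : ℕ} (μ : Measure (Fin d → ℝ))
    (f : (Fin d → ℝ) → (Fin n → ℝ)) (x : Fin d → ℝ) : Prop :=
  ∀ B ∈ nhds x, ∀ L : AffineSubspace ℝ (Fin n → ℝ),
    f '' (B ∩ msupp μ) ⊆ (L : Set (Fin n → ℝ)) → L = ⊤

/-- `f` is `μ`-nonplanar in `L` at `x`: for every neighborhood `B` of `x`, the image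
`f(B ∩ supp μ)` is not contained in any proper affine subspace of `L`. -/
def MuNonplanarInAt {d n : ℕ} (μ : Measure (Fin d → ℝ)) (L : AffineSubspace ℝ (Fin n → ℝ))
    (f : (Fin d → ℝ) → (Fin n → ℝ)) (x : Fin d → ℝ) : Prop :=
  ∀ B ∈ nhds x, ∀ L' : AffineSubspace ℝ (Fin n → ℝ), L' < L →
    ¬ (f '' (B ∩ msupp μ) ⊆ (L' : Set (Fin n → ℝ)))

/-- `μ` is `D`-Federer on `U`: `μ(3B) ≤ D μ(B)` for every ball `B` centered in `supp μ`
with `3B ⊆ U`. -/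
def IsFedererOn {d : ℕ} (D : ℝ) (μ : Measure (Fin d → ℝ)) (U : Set (Fin d → ℝ)) : Prop :=
  ∀ (x : Fin d → ℝ) (r : ℝ), x ∈ msupp μ → 0 < r → ball x (3 * r) ⊆ U →
    μ (ball x (3 * r)) ≤ ENNReal.ofReal D * μ (ball x r)

/-- `μ` is Federer: for `μ`-a.e. point there are a neighborhood `U` and `D > 0` such that
`μ` is `D`-Federer on `U`. -/
def Federer {d : ℕ} (μ : Measure (Fin d → ℝ)) : Prop :=
  ∀ᵐ x ∂μ, ∃ U ∈ nhds x, ∃ D > 0, IsFedererOn D μ U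

/-- `μ` is absolutely `(C, α)`-decaying on `U`: for every ball `B = B(x, r) ⊆ U` centered
in `supp μ`, every affine hyperplane `L = {z | a·z = b}` (`a ≠ 0`) and every `ε > 0`,
`μ(B ∩ L^{(ε)}) ≤ C (ε/r)^α μ(B)`. -/
def AbsDecayingOn {d : ℕ} (C α : ℝ) (μ : Measure (Fin d → ℝ)) (U : Set (Fin d → ℝ)) : Prop :=
  ∀ (x : Fin d → ℝ) (r : ℝ), x ∈ msupp μ → 0 < r → ball x r ⊆ U →
    ∀ (a : Fin d → ℝ) (b : ℝ), a ≠ 0 → ∀ ε : ℝ, 0 < ε →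
      μ (ball x r ∩ Metric.thickening ε {z | (∑ i, a i * z i) = b}) ≤
        ENNReal.ofReal (C * (ε / r) ^ α) * μ (ball x r)

/-- `μ` is absolutely decaying: for `μ`-a.e. point there are a neighborhood `U` and
`C, α > 0` such that `μ` is absolutely `(C, α)`-decaying on `U`. -/
def AbsDecaying {d : ℕ} (μ : Measure (Fin d → ℝ)) : Prop :=
  ∀ᵐ x ∂μ, ∃ U ∈ nhds x, ∃ C > 0, ∃ α > 0, AbsDecayingOn C α μ U

/-- `μ` is absolutely friendly: absolutely decaying and Federer. -/
def AbsFriendly {d : ℕ} (μ : Measure (Fin d → ℝ)) : Prop :=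
  AbsDecaying μ ∧ Federer μ

/-- `μ` is `β`-scaling: `μ(B(x, r)) ≤ c rᵝ` for some `c > 0` and all balls. -/
def BetaScaling {d : ℕ} (β : ℝ) (μ : Measure (Fin d → ℝ)) : Prop :=
  ∃ c > (0 : ℝ), ∀ (x : Fin d → ℝ) (r : ℝ), 0 < r →
    μ (ball x r) ≤ ENNReal.ofReal (c * r ^ β)

/-- `dim_af(K)`: the supremum of `β > 0` such that `K` supports a nonzero `β`-scaling
absolutely friendly measure (with `sup ∅ = 0`). -/
def dimAf {n : ℕ} (K : Set (Fin n → ℝ)) : ℝ :=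
  sSup {β : ℝ | 0 < β ∧ ∃ μ : Measure (Fin n → ℝ),
    μ ≠ 0 ∧ BetaScaling β μ ∧ AbsFriendly μ ∧ msupp μ ⊆ K}

/-- `y ∈ ℝⁿ` is badly approximable: there is `c > 0` with `|y·q + p| > c ‖q‖^{-n}`
for all `q ∈ ℤⁿ \ {0}` and `p ∈ ℤ`. -/
def BadlyApprox {n : ℕ} (y : Fin n → ℝ) : Prop :=
  ∃ c > (0 : ℝ), ∀ q : Fin n → ℤ, q ≠ 0 → ∀ p : ℤ,
    c * inorm q ^ (-(n : ℝ)) < |(∑ i, y i * (q i : ℝ)) + (p : ℝ)|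

/-- `f` is `l`-nondegenerate at `x`: the partial derivatives of `f` at `x` of order
between `1` and `l` span `ℝⁿ`. -/
def lNondegenerateAt {d n : ℕ} (l : ℕ) (f : (Fin d → ℝ) → (Fin n → ℝ))
    (x : Fin d → ℝ) : Prop :=
  Submodule.span ℝ {w : Fin n → ℝ | ∃ j : ℕ, 1 ≤ j ∧ j ≤ l ∧
    ∃ m : Fin j → (Fin d → ℝ), w = iteratedFDeriv ℝ j f x m} = ⊤

/-- `f` is nondegenerate at `x` if it is `l`-nondegenerate at `x` for some `l`. -/
def NondegenerateAt {d n : ℕ} (f : (Fin d → ℝ) → (Fin n → ℝ)) (x : Fin d → ℝ) : Prop :=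
  ∃ l : ℕ, lNondegenerateAt l f x

end DK

/-!
For `w > v` pick `γ(v) < γ < γ(w)`. By Dani's correspondence, whenever `f x` is
`w`-approximable the lattice `g_t u_{f x} ℤ^{n+1}` has a nonzero vector of norm `< 2^{-γt}`
for infinitely many `t`, so `f⁻¹{w-approximable} ∩ B` lies in the limsup of the sets in the
hypothesis and is `μ`-null by Borel–Cantelli. These balls cover `μ|_U`-almost all of `U`, and
second countability makes `(f_*μ){w-approximable}` vanish for every `w > v`.
-/

open Topology
open scoped Matrix

theorem measurableSet_setOf_infinite {α ι : Type*} [MeasurableSpace α] [Countable ι]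
    {P : ι → α → Prop} (hP : ∀ i, MeasurableSet {x | P i x}) :
    MeasurableSet {x | {i | P i x}.Infinite} := by
  have : {x | {i | P i x}.Infinite} = ⋂ F : Finset ι, ⋃ i ∉ F, {x | P i x} := by
    ext x
    simp only [mem_ofPred_eq, mem_iInter, mem_iUnion, exists_prop]
    exact ⟨fun hx F => (hx.exists_notMem_finset F).imp fun i hi => ⟨hi.2, hi.1⟩,
      fun hx hfin => (hx hfin.toFinset).elim fun i hi => hi.1 (hfin.mem_toFinset.2 hi.2)⟩
  rw [this]
  exact .iInter fun F => .biUnion (to_countable _) fun i _ => hP i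

theorem MeasureTheory.measure_eq_zero_of_ae_exists_nhds {X : Type*} [TopologicalSpace X]
    [SecondCountableTopology X] [MeasurableSpace X] {μ : Measure X} {s : Set X}
    (h : ∀ᵐ x ∂μ, ∃ u ∈ 𝓝 x, μ (s ∩ u) = 0) : μ s = 0 := by
  set G := {x | ∃ u ∈ 𝓝 x, μ (s ∩ u) = 0}
  have hG : μ (s ∩ G) = 0 := measure_null_of_locally_null _ fun x hx => by
    obtain ⟨u, hu, hsu⟩ := hx.2
    exact ⟨s ∩ G ∩ u, inter_mem_nhdsWithin _ hu,
      measure_mono_null (inter_subset_inter_left _ inter_subset_left) hsu⟩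
  refine measure_mono_null (fun x hx => ?_) (measure_union_null hG (ae_iff.1 h))
  by_cases hxG : x ∈ G
  exacts [Or.inl ⟨hx, hxG⟩, Or.inr hxG]

theorem MeasureTheory.Measure.map_apply_eq_zero {α β : Type*} [MeasurableSpace α]
    [MeasurableSpace β] {μ : Measure α} {f : α → β} {s : Set β} (hs : MeasurableSet s)
    (h : μ (f ⁻¹' s) = 0) : μ.map f s = 0 := by
  by_cases hf : AEMeasurable f μ
  · rwa [Measure.map_apply_of_aemeasurable hf hs]
  · simp [Measure.map_of_not_aemeasurable hf]

theorem Fin.norm_cons {E : Type*} [SeminormedAddCommGroup E] {n : ℕ} (a : E) (w : Fin n → E) :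
    ‖(Fin.cons a w : Fin (n + 1) → E)‖ = max ‖a‖ ‖w‖ := by
  refine le_antisymm (pi_norm_le_iff_of_nonneg (by positivity) |>.2 fun i => ?_) (max_le ?_ ?_)
  · cases i using Fin.cases with
    | zero => exact le_max_of_le_left (by simp)
    | succ i => exact le_max_of_le_right (by simpa using norm_le_pi_norm w i)
  · simpa using norm_le_pi_norm (Fin.cons a w : Fin (n + 1) → E) 0
  · exact pi_norm_le_iff_of_nonneg (norm_nonneg _) |>.2 fun i => by
      simpa using norm_le_pi_norm (Fin.cons a w : Fin (n + 1) → E) i.succ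

namespace DK

variable {n : ℕ}

theorem measurableSet_vApprox (v : ℝ) : MeasurableSet {y : Fin n → ℝ | vApprox v y} := by
  refine measurableSet_setOf_infinite fun q => ?_
  rw [ofPred_exists]
  exact (isOpen_iUnion fun p => isOpen_lt (by fun_prop) continuous_const).measurableSet

theorem not_vApprox_of_fin_zero (v : ℝ) (y : Fin 0 → ℝ) : ¬ vApprox v y :=
  not_not.2 (Set.toFinite _)

theorem finite_setOf_inorm_lt (R : ℝ) : {q : Fin n → ℤ | inorm q < R}.Finite := by
  refine (Set.finite_Icc (fun _ => -⌈R⌉) (fun _ => ⌈R⌉)).subset fun q hq => ?_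
  have hR := Int.le_ceil R
  have hq (i : Fin n) := abs_lt.1 ((norm_le_pi_norm (fun j => (q j : ℝ)) i).trans_lt hq)
  refine ⟨fun i => ?_, fun i => ?_⟩
  · exact Int.cast_le (R := ℝ) |>.1 (by push_cast; linarith [hq i])
  · exact Int.cast_le (R := ℝ) |>.1 (by linarith [hq i])

theorem uMat_mulVec_cons (y : Fin n → ℝ) (a : ℝ) (w : Fin n → ℝ) :
    uMat y *ᵥ Fin.cons a w = Fin.cons (∑ i, y i * w i + a) w := by
  ext k
  cases k using Fin.cases with
  | zero => simp [uMat, Matrix.mulVec, dotProduct, Fin.sum_univ_succ, add_comm]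
  | succ j => simp [uMat, Matrix.mulVec, dotProduct, Fin.succ_ne_zero]

theorem gMat_mulVec_cons (t a : ℝ) (w : Fin n → ℝ) :
    gMat n t *ᵥ Fin.cons a w = Fin.cons (2 ^ ((n : ℝ) * t) * a) ((2 : ℝ) ^ (-t) • w) := by
  ext k
  cases k using Fin.cases with
  | zero => simp [gMat, Matrix.mulVec_diagonal]
  | succ j => simp [gMat, Matrix.mulVec_diagonal, Fin.succ_ne_zero]

theorem latNorm_cons (t : ℝ) (y : Fin n → ℝ) (p : ℤ) (q : Fin n → ℤ) :
    latNorm t y (Fin.cons p q) =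
      max (2 ^ ((n : ℝ) * t) * |∑ i, y i * q i + p|) (2 ^ (-t) * inorm q) := by
  have hcast : (fun i => ((Fin.cons p q : Fin (n + 1) → ℤ) i : ℝ)) =
      Fin.cons (p : ℝ) (fun i => (q i : ℝ)) := (Fin.comp_cons _ _ _)
  rw [latNorm, ← Matrix.mulVec_mulVec, hcast, uMat_mulVec_cons, gMat_mulVec_cons,
    Fin.norm_cons, norm_smul, norm_mul, inorm, Real.norm_eq_abs (∑ i, _ + _),
    Real.norm_of_nonneg (by positivity), Real.norm_of_nonneg (by positivity)]

theorem gammaExp_nonneg {v : ℝ} (hv : (n : ℝ) ≤ v) : 0 ≤ gammaExp n v :=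
  div_nonneg (sub_nonneg.2 hv) <|
    mul_nonneg n.cast_nonneg (by linarith [(n.cast_nonneg : (0 : ℝ) ≤ n)])

theorem gammaExp_strictMonoOn (hn : 0 < n) : StrictMonoOn (gammaExp n) (Ioi (-1)) := by
  intro v hv w hw hvw
  have hn' : (0 : ℝ) < n := Nat.cast_pos.2 hn
  have hv' : 0 < v + 1 := by linarith [mem_Ioi.1 hv]
  have hw' : 0 < w + 1 := by linarith [mem_Ioi.1 hw]
  rw [gammaExp, gammaExp, div_lt_div_iff₀ (by positivity) (by positivity)]
  nlinarith [mul_pos hn' (mul_pos (sub_pos.2 hvw) (by positivity : (0 : ℝ) < 1 + n))]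

theorem mul_add_one_lt_sub_of_lt_gammaExp (hn : 0 < n) {v γ : ℝ} (hv : -1 < v) (hγ : 0 ≤ γ)
    (hγv : γ < gammaExp n v) : γ * (v + 1) < v - n := by
  have hn' : (1 : ℝ) ≤ n := Nat.one_le_cast.2 hn
  have hv' : 0 < v + 1 := by linarith
  calc γ * (v + 1) ≤ γ * (n * (v + 1)) := by gcongr; nlinarith
    _ < v - n := (lt_div_iff₀ (by positivity)).1 hγv

/-- For `‖q‖ = 2 ^ L` the time `s` makes both blocks of `g_s u_y (p, q)` small:
`2 ^ (-s) ‖q‖ < 2 ^ (-γ s)` and `2 ^ (a s) ‖q‖ ^ (-v) ≤ 2 ^ (-γ s)`. -/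
theorem eventually_exists_nat_exponent {a v γ : ℝ} (ha : 0 ≤ a) (hav : a ≤ v) (hγ : 0 ≤ γ)
    (hγv : γ * (v + 1) < v - a) :
    ∀ᶠ L : ℝ in atTop, ∃ s : ℕ, L < (1 - γ) * s ∧ (a + γ) * s ≤ v * L := by
  have h1γ : 0 < 1 - γ := by nlinarith
  have hδ : 0 < v * (1 - γ) - (a + γ) := by linarith
  filter_upwards [eventually_ge_atTop ((a + γ) * (1 - γ) / (v * (1 - γ) - (a + γ)))]
    with L hL
  replace hL : (a + γ) * (1 - γ) ≤ L * (v * (1 - γ) - (a + γ)) := (div_le_iff₀ hδ).1 hL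
  have hL₀ : 0 ≤ L / (1 - γ) := div_nonneg (by nlinarith) h1γ.le
  refine ⟨⌊L / (1 - γ)⌋₊ + 1,
    (div_lt_iff₀' h1γ).1 (by exact_mod_cast Nat.lt_floor_add_one _), ?_⟩
  have hs : ((⌊L / (1 - γ)⌋₊ + 1 : ℕ) : ℝ) ≤ L / (1 - γ) + 1 := by
    push_cast; linarith [Nat.floor_le hL₀]
  calc (a + γ) * ((⌊L / (1 - γ)⌋₊ + 1 : ℕ) : ℝ) ≤ (a + γ) * (L / (1 - γ) + 1) := by gcongr
    _ ≤ v * L := by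
      rw [← sub_nonneg]
      have : v * L - (a + γ) * (L / (1 - γ) + 1) =
          (L * (v * (1 - γ) - (a + γ)) - (a + γ) * (1 - γ)) / (1 - γ) := by
        field_simp; ring
      rw [this]
      exact div_nonneg (by linarith) h1γ.le

/-- Dani correspondence, at the time `t ≈ log₂ ‖q‖ / (1 - γ)` for each approximation `q`. -/
theorem frequently_exists_latNorm_lt_of_vApprox {v γ : ℝ} (hv : (n : ℝ) ≤ v) (hγ : 0 ≤ γ)
    (hγv : γ * (v + 1) < v - n) {y : Fin n → ℝ} (hy : vApprox v y) :
    ∃ᶠ t : ℕ in atTop, ∃ q : Fin (n + 1) → ℤ, q ≠ 0 ∧ latNorm t y q < 2 ^ (-(γ * t)) := by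
  rw [frequently_atTop]
  intro T
  obtain ⟨L₀, hL₀⟩ := ((eventually_exists_nat_exponent n.cast_nonneg hv hγ hγv).and
    (eventually_ge_atTop (T : ℝ))).exists_forall_of_atTop
  obtain ⟨q, ⟨p, hp⟩, hq⟩ := (hy.sdiff (finite_setOf_inorm_lt ((2 : ℝ) ^ L₀))).nonempty
  have hQ₀ : 0 < inorm q := lt_of_lt_of_le (by positivity) (not_lt.1 hq)
  set L := Real.logb 2 (inorm q)
  have hQL : inorm q = 2 ^ L := (Real.rpow_logb two_pos (by norm_num) hQ₀).symm
  obtain ⟨⟨s, hLs, hsv⟩, hTL⟩ :=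
    hL₀ L ((Real.le_logb_iff_rpow_le one_lt_two hQ₀).2 (not_lt.1 hq))
  have hq₀ : q ≠ 0 := by
    rintro rfl
    simp [inorm, ← Pi.zero_def] at hQ₀
  refine ⟨s, ?_, Fin.cons p q, Matrix.cons_nonzero_iff.2 (.inr hq₀), ?_⟩
  · exact_mod_cast hTL.trans (by nlinarith : L ≤ s)
  rw [latNorm_cons, max_lt_iff]
  constructor
  · calc (2 : ℝ) ^ ((n : ℝ) * s) * |∑ i, y i * q i + p|
          < 2 ^ ((n : ℝ) * s) * inorm q ^ (-v) := by gcongr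
      _ = 2 ^ (n * s - v * L) := by
          rw [hQL, ← Real.rpow_mul zero_le_two, ← Real.rpow_add two_pos]
          ring_nf
      _ ≤ 2 ^ (-(γ * s)) := Real.rpow_le_rpow_of_exponent_le one_le_two (by linarith)
  · calc (2 : ℝ) ^ (-(s : ℝ)) * inorm q = 2 ^ (L - s) := by
          rw [hQL, ← Real.rpow_add two_pos]
          ring_nf
      _ < 2 ^ (-(γ * s)) := Real.rpow_lt_rpow_of_exponent_lt one_lt_two (by linarith)

theorem measure_setOf_vApprox_inter_eq_zero {α : Type*} [MeasurableSpace α] {μ : Measure α}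
    {f : α → Fin n → ℝ} {s : Set α} {v γ : ℝ} (hv : (n : ℝ) ≤ v) (hγ : 0 ≤ γ)
    (hγv : γ * (v + 1) < v - n)
    (hsum : ∑' t : ℕ, μ {x ∈ s | ∃ q : Fin (n + 1) → ℤ, q ≠ 0 ∧
      latNorm ((t : ℝ) + 1) (f x) q < 2 ^ (-(γ * ((t : ℝ) + 1)))} ≠ ∞) :
    μ ({x | vApprox v (f x)} ∩ s) = 0 := by
  refine measure_mono_null (fun x ⟨hx, hxs⟩ => ?_) (measure_limsup_atTop_eq_zero hsum)
  have := frequently_exists_latNorm_lt_of_vApprox hv hγ hγv hx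
  rw [← map_add_atTop_eq_nat 1, frequently_map] at this
  rw [mem_limsup_iff_frequently_mem]
  exact this.mono fun t ht => ⟨hxs, by exact_mod_cast ht⟩

theorem measDiophExp_le_of_forall_lt {ν : Measure (Fin n → ℝ)} {v : ℝ}
    (h : ∀ w, v < w → ν {y | vApprox w y} = 0) : measDiophExp ν ≤ ENNReal.ofReal v := by
  refine sSup_le ?_
  rintro _ ⟨w, hw, rfl, hνw⟩
  exact le_of_not_gt fun hvw => hνw.ne' (h w ((ENNReal.ofReal_lt_ofReal_iff hw).1 hvw))

end DK

theorem stmt3_general {d n : ℕ} (U : Set (Fin d → ℝ))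
    (μ : Measure (Fin d → ℝ)) (f : (Fin d → ℝ) → (Fin n → ℝ))
    (v : ℝ) (hv : (n : ℝ) ≤ v)
    (h : ∀ᵐ x₀ ∂μ.restrict U, ∃ r > (0 : ℝ), ball x₀ r ⊆ U ∧
      ∀ γ : ℝ, DK.gammaExp n v < γ →
        (∑' t : ℕ, μ {x ∈ ball x₀ r | ∃ q : Fin (n + 1) → ℤ, q ≠ 0 ∧
          DK.latNorm ((t : ℝ) + 1) (f x) q < (2 : ℝ) ^ (-(γ * ((t : ℝ) + 1)))}) < ⊤) :
    DK.measDiophExp ((μ.restrict U).map f) ≤ ENNReal.ofReal v := by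
  refine DK.measDiophExp_le_of_forall_lt fun w hvw => ?_
  rcases n.eq_zero_or_pos with rfl | hn
  · simp [DK.not_vApprox_of_fin_zero]
  have hv₀ : (-1 : ℝ) < v := by linarith [(n.cast_nonneg : (0 : ℝ) ≤ n)]
  obtain ⟨γ, hvγ, hγw⟩ := exists_between
    (DK.gammaExp_strictMonoOn hn (mem_Ioi.2 hv₀) (mem_Ioi.2 (hv₀.trans hvw)) hvw)
  have hγ : 0 ≤ γ := (DK.gammaExp_nonneg hv).trans hvγ.le
  have hwγ := DK.mul_add_one_lt_sub_of_lt_gammaExp hn (hv₀.trans hvw) hγ hγw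
  refine Measure.map_apply_eq_zero (DK.measurableSet_vApprox w)
    (measure_eq_zero_of_ae_exists_nhds ?_)
  filter_upwards [h]
  rintro x₀ ⟨r, hr, -, hsum⟩
  exact ⟨ball x₀ r, ball_mem_nhds x₀ hr, Measure.absolutelyContinuous_restrict
    (DK.measure_setOf_vApprox_inter_eq_zero (hv.trans hvw.le) hγ hwγ (hsum γ hvγ).ne)⟩

/-- Borel–Cantelli criterion: if for `μ`-a.e. `x₀ ∈ U` there is a ball
`B ⊆ U` centered at `x₀` such that for every `γ > γ(v)` the series
`∑_{t ≥ 1} μ {x ∈ B | g_t u_{f(x)} ℤ^{n+1} has a nonzero vector of norm < 2^{-γt}}`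
converges, then `ω(f_*μ) ≤ v`. -/
theorem stmt3 {d n : ℕ} (U : Set (Fin d → ℝ)) (hUopen : IsOpen U)
    (μ : Measure (Fin d → ℝ)) (f : (Fin d → ℝ) → (Fin n → ℝ))
    (v : ℝ) (hv : (n : ℝ) ≤ v)
    (h : ∀ᵐ x₀ ∂μ.restrict U, ∃ r > (0 : ℝ), ball x₀ r ⊆ U ∧
      ∀ γ : ℝ, DK.gammaExp n v < γ →
        (∑' t : ℕ, μ {x ∈ ball x₀ r | ∃ q : Fin (n + 1) → ℤ, q ≠ 0 ∧
          DK.latNorm ((t : ℝ) + 1) (f x) q < (2 : ℝ) ^ (-(γ * ((t : ℝ) + 1)))}) < ⊤) :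
    DK.measDiophExp ((μ.restrict U).map f) ≤ ENNReal.ofReal v :=
  stmt3_general U μ f v hv h
end
end

section
/- For Lebesgue-almost every y ∈ ℝ^n one has ω^×(y) = n; that is, Lebesgue measure on ℝ^n is strongly extremal. -/
open MeasureTheory Metric Set Filter ENNReal

noncomputable section

/-! Every `y` is `n`-multiplicatively approximable by Dirichlet's theorem applied to a single
coordinate: for `q = (k, 0, …, 0)` one has `Π₊(q) = k`, so `Π₊(q)^{-n/n} = 1/k`.

Conversely let `v > n` and `σ = v/n > 1`. For fixed `q ≠ 0`, the points `y` of a ball with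
`|y·q + p| < δ` for some `p ∈ ℤ` form a set of measure `O(δ)`: slicing along a coordinate `k`
with `q_k ≠ 0`, each slice of the ball of radius `R` is covered by at most `2R|q_k| + 3`
intervals of length `2δ/|q_k|`. Since `Π₊(q)^{-σ} = ∏ᵢ max(1, |qᵢ|)^{-σ}`, the series
`∑_q Π₊(q)^{-σ}` factors as `(∑_{a ∈ ℤ} max(1, |a|)^{-σ})ⁿ < ∞`, and Borel–Cantelli shows that
almost no `y` is `v`-multiplicatively approximable. -/

theorem ENNReal.tsum_fin_pi_prod {ι : Type*} (f : ι → ℝ≥0∞) (m : ℕ) :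
    ∑' q : Fin m → ι, ∏ i, f (q i) = (∑' a, f a) ^ m := by
  induction m with
  | zero => simp
  | succ m ih =>
    rw [← (Fin.consEquiv fun _ => ι).tsum_eq, pow_succ', ENNReal.tsum_prod', ← ih,
      ← ENNReal.tsum_mul_right]
    refine tsum_congr fun a => ?_
    rw [← ENNReal.tsum_mul_left]
    simp [Fin.prod_univ_succ]

theorem Int.card_Icc_ceil_floor_le {x y : ℝ} (hxy : x ≤ y) :
    ((Finset.Icc ⌈x⌉ ⌊y⌋).card : ℝ) ≤ y - x + 1 := by
  have hcard : ((Finset.Icc ⌈x⌉ ⌊y⌋).card : ℤ) = max (⌊y⌋ + 1 - ⌈x⌉) 0 := by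
    rw [Int.card_Icc, Int.toNat_eq_max]
  have hfloor := Int.floor_le y
  have hceil := Int.le_ceil x
  rw [← Int.cast_natCast, hcard]
  push_cast
  exact max_le (by linarith) (by linarith)

theorem Real.volume_setOf_exists_int_abs_mul_add_lt_le {a : ℤ} (ha : a ≠ 0) (c : ℝ) {R δ : ℝ}
    (hR : 0 ≤ R) (hδ₀ : 0 ≤ δ) (hδ : δ ≤ 1) :
    volume {t ∈ closedBall (0 : ℝ) R | ∃ p : ℤ, |t * a + c + p| < δ} ≤
      ENNReal.ofReal ((2 * R + 3) * (2 * δ)) := by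
  have ha₁ : (1 : ℝ) ≤ |(a : ℝ)| := by exact_mod_cast Int.one_le_abs ha
  have ha₀ : (0 : ℝ) < |(a : ℝ)| := one_pos.trans_le ha₁
  set L := R * |(a : ℝ)| + 1
  set P := Finset.Icc ⌈-c - L⌉ ⌊-c + L⌋
  have hcover : {t ∈ closedBall (0 : ℝ) R | ∃ p : ℤ, |t * a + c + p| < δ} ⊆
      ⋃ p ∈ P, ball (-(c + p) / a) (δ / |(a : ℝ)|) := by
    rintro t ⟨ht, p, hp⟩
    rw [mem_closedBall_zero_iff, Real.norm_eq_abs] at ht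
    have hta : |t * a| ≤ R * |(a : ℝ)| := by rw [abs_mul]; gcongr
    have hp' := abs_lt.1 (hp.trans_le hδ)
    have hta' := abs_le.1 hta
    refine mem_iUnion₂.2 ⟨p, Finset.mem_Icc.2 ⟨Int.ceil_le.2 (by linarith),
      Int.le_floor.2 (by linarith)⟩, ?_⟩
    have ha' : (a : ℝ) ≠ 0 := by exact_mod_cast ha
    rw [mem_ball, Real.dist_eq, show t - -(c + p) / a = (t * a + c + p) / a by field_simp; ring,
      abs_div]
    gcongr
  have hcard : (P.card : ℝ) * |(a : ℝ)|⁻¹ ≤ 2 * R + 3 := by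
    have := Int.card_Icc_ceil_floor_le (show -c - L ≤ -c + L by linarith [mul_nonneg hR ha₀.le])
    calc (P.card : ℝ) * |(a : ℝ)|⁻¹ ≤ (2 * R * |(a : ℝ)| + 3) * |(a : ℝ)|⁻¹ := by
          gcongr; linarith
      _ = 2 * R + 3 * |(a : ℝ)|⁻¹ := by field_simp
      _ ≤ 2 * R + 3 := by linarith [inv_le_one_of_one_le₀ ha₁]
  calc volume {t ∈ closedBall (0 : ℝ) R | ∃ p : ℤ, |t * a + c + p| < δ}
      ≤ ∑ p ∈ P, volume (ball (-(c + p) / a) (δ / |(a : ℝ)|)) :=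
        (measure_mono hcover).trans (measure_biUnion_finset_le _ _)
    _ = ENNReal.ofReal (P.card * (2 * (δ / |(a : ℝ)|))) := by
        simp [Real.volume_ball, ENNReal.ofReal_mul]
    _ ≤ ENNReal.ofReal ((2 * R + 3) * (2 * δ)) := by
        refine ENNReal.ofReal_le_ofReal ?_
        calc (P.card : ℝ) * (2 * (δ / |(a : ℝ)|)) = P.card * |(a : ℝ)|⁻¹ * (2 * δ) := by ring
          _ ≤ (2 * R + 3) * (2 * δ) := by gcongr

theorem Real.infinite_setOf_abs_mul_sub_round_lt_inv (x : ℝ) :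
    {k : ℕ | 0 < k ∧ |k * x - round (k * x)| < (k : ℝ)⁻¹}.Infinite := by
  set A := {k : ℕ | 0 < k ∧ |k * x - round (k * x)| < (k : ℝ)⁻¹}
  set err : ℕ → ℝ := fun k => |k * x - round (k * x)|
  intro hA
  have hA₁ : A.Nonempty := by
    refine ⟨1, one_pos, ?_⟩
    have := abs_sub_round (1 * x)
    push_cast
    linarith
  obtain ⟨a, ⟨ha, -⟩, hmin⟩ := Set.exists_min_image A err hA hA₁
  rcases (abs_nonneg _ : 0 ≤ err a).eq_or_lt with h0 | hpos
  · -- `a * x` is an integer, so every multiple of `a` lies in `A`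
    refine hA.not_infinite <| Set.infinite_of_injective_forall_mem
      (f := fun m : ℕ => (m + 1) * a) (fun m m' h => by simpa [ha.ne'] using h) fun m => ?_
    have hax : (a : ℝ) * x = round ((a : ℝ) * x) := by
      simpa [err, sub_eq_zero, eq_comm] using h0
    refine ⟨by positivity, ?_⟩
    calc |(((m + 1) * a : ℕ) : ℝ) * x - round ((((m + 1) * a : ℕ) : ℝ) * x)|
        ≤ |(((m + 1) * a : ℕ) : ℝ) * x - ((m + 1 : ℤ) * round ((a : ℝ) * x) : ℤ)| := round_le _ _
      _ = 0 := by push_cast; rw [mul_assoc, hax]; simp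
      _ < _ := by positivity
  · -- Dirichlet's theorem yields an element of `A` with a smaller error than `a`
    obtain ⟨N, hN⟩ := exists_nat_gt (err a)⁻¹
    have hN₀ : 0 < N := by exact_mod_cast (inv_pos.2 hpos).trans hN
    obtain ⟨k, hk₀, hkN, hk⟩ := Real.exists_nat_abs_mul_sub_round_le x hN₀
    have hNk : 1 / ((N : ℝ) + 1) < (k : ℝ)⁻¹ := by
      rw [one_div]; gcongr; exact_mod_cast Nat.lt_succ_of_le hkN
    have hNa : 1 / ((N : ℝ) + 1) < err a := by
      rw [one_div, inv_lt_comm₀ (by positivity) hpos]; linarith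
    exact (hmin k ⟨hk₀, hk.trans_lt hNk⟩).not_gt (hk.trans_lt hNa)

theorem MeasureTheory.volume_le_of_forall_volume_slice_le {n : ℕ} (i : Fin (n + 1))
    {S : Set (Fin (n + 1) → ℝ)} (hS : MeasurableSet S) (B : Set (Fin n → ℝ)) (c : ℝ≥0∞)
    (hB : ∀ t z, i.insertNth t z ∈ S → z ∈ B)
    (hc : ∀ z ∈ B, volume {t | i.insertNth t z ∈ S} ≤ c) :
    volume S ≤ c * volume B := by
  have he := measurePreserving_piFinSuccAbove (fun _ : Fin (n + 1) => (volume : Measure ℝ)) i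
  have hT : MeasurableSet ((MeasurableEquiv.piFinSuccAbove (fun _ => ℝ) i).symm ⁻¹' S) :=
    (MeasurableEquiv.piFinSuccAbove (fun _ => ℝ) i).symm.measurable hS
  calc volume S
      = (volume.prod volume) ((MeasurableEquiv.piFinSuccAbove (fun _ => ℝ) i).symm ⁻¹' S) :=
        (he.symm.measure_preimage hS.nullMeasurableSet).symm
    _ = ∫⁻ z, volume {t | i.insertNth t z ∈ S} := Measure.prod_apply_symm hT
    _ ≤ ∫⁻ z, B.indicator (fun _ => c) z := lintegral_mono fun z => by
        by_cases hz : z ∈ B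
        · simpa [hz] using hc z hz
        · simp [hz, show {t | i.insertNth t z ∈ S} = ∅ from
            eq_empty_of_forall_notMem fun t ht => hz (hB t z ht)]
    _ ≤ c * volume B := lintegral_indicator_const_le B c

theorem Fin.insertNth_mem_closedBall_zero_iff {n : ℕ} (i : Fin (n + 1)) (t : ℝ) (z : Fin n → ℝ)
    {R : ℝ} (hR : 0 ≤ R) :
    i.insertNth t z ∈ closedBall (0 : Fin (n + 1) → ℝ) R ↔
      t ∈ closedBall (0 : ℝ) R ∧ z ∈ closedBall (0 : Fin n → ℝ) R := by
  simp only [mem_closedBall_zero_iff, pi_norm_le_iff_of_nonneg hR, i.forall_iff_succAbove,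
    Fin.insertNth_apply_same, Fin.insertNth_apply_succAbove]

theorem volume_setOf_exists_int_abs_sum_mul_add_lt_le {n : ℕ} {q : Fin (n + 1) → ℤ} (hq : q ≠ 0)
    {R δ : ℝ} (hR : 0 ≤ R) (hδ₀ : 0 ≤ δ) (hδ : δ ≤ 1) :
    volume {y ∈ closedBall (0 : Fin (n + 1) → ℝ) R | ∃ p : ℤ, |∑ i, y i * q i + p| < δ} ≤
      ENNReal.ofReal ((2 * R + 3) * (2 * δ)) * ENNReal.ofReal ((2 * R) ^ n) := by
  obtain ⟨k, hk⟩ : ∃ k, q k ≠ 0 := Function.ne_iff.1 hq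
  have hsum (t : ℝ) (z : Fin n → ℝ) : ∑ i, (k.insertNth t z : Fin (n + 1) → ℝ) i * q i =
      t * q k + ∑ j, z j * q (k.succAbove j) := by
    simp [Fin.sum_univ_succAbove _ k]
  have hS : MeasurableSet
      {y ∈ closedBall (0 : Fin (n + 1) → ℝ) R | ∃ p : ℤ, |∑ i, y i * q i + p| < δ} := by
    change MeasurableSet (closedBall (0 : Fin (n + 1) → ℝ) R ∩
      {y | ∃ p : ℤ, |∑ i, y i * q i + p| < δ})
    rw [ofPred_exists]
    exact measurableSet_closedBall.inter <|
      .iUnion fun p => (isOpen_lt (by fun_prop) continuous_const).measurableSet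
  rw [show ENNReal.ofReal ((2 * R) ^ n) = volume (closedBall (0 : Fin n → ℝ) R) by simp [hR]]
  refine MeasureTheory.volume_le_of_forall_volume_slice_le k hS _ _
    (fun t z h => ((k.insertNth_mem_closedBall_zero_iff t z hR).1 h.1).2) fun z _ => ?_
  refine (measure_mono fun t ht => ?_).trans <| Real.volume_setOf_exists_int_abs_mul_add_lt_le hk
    (∑ j, z j * q (k.succAbove j)) hR hδ₀ hδ
  obtain ⟨hball, p, hp⟩ := ht
  exact ⟨((k.insertNth_mem_closedBall_zero_iff t z hR).1 hball).1, p, by rwa [hsum] at hp⟩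

theorem sSup_setOf_ofReal_eq {P : ℝ → Prop} {x : ℝ} (hx : 0 ≤ x) (hgt : ∀ v, x < v → ¬P v)
    (hP : 0 < x → P x) :
    sSup {e : ℝ≥0∞ | ∃ v : ℝ, 0 < v ∧ e = ENNReal.ofReal v ∧ P v} = ENNReal.ofReal x := by
  refine le_antisymm (sSup_le ?_) ?_
  · rintro _ ⟨v, -, rfl, hv⟩
    exact ENNReal.ofReal_le_ofReal (not_lt.1 fun h => hgt v h hv)
  · rcases hx.eq_or_lt with rfl | hx
    · simp
    · exact le_sSup ⟨x, hx, rfl, hP hx⟩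

namespace DK

theorem piPlus_eq_prod_max {n : ℕ} (q : Fin n → ℤ) : piPlus q = ∏ i, max 1 |(q i : ℝ)| := by
  refine Finset.prod_congr rfl fun i _ => ?_
  split_ifs with h
  · simp [h]
  · exact (max_eq_right (mod_cast Int.one_le_abs h)).symm

theorem one_le_piPlus {n : ℕ} (q : Fin n → ℤ) : 1 ≤ piPlus q := by
  rw [piPlus_eq_prod_max]
  exact Finset.one_le_prod fun i _ => le_max_left _ _

theorem piPlus_single {n : ℕ} (i : Fin n) {a : ℤ} (ha : a ≠ 0) :
    piPlus (Pi.single i a) = |(a : ℝ)| := by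
  rw [piPlus, Finset.prod_eq_single i (fun j _ hj => by simp [hj]) (by simp)]
  simp [ha]

theorem tsum_ofReal_piPlus_rpow_neg_ne_top (n : ℕ) {s : ℝ} (hs : 1 < s) :
    ∑' q : Fin n → ℤ, ENNReal.ofReal (piPlus q ^ (-s)) ≠ ∞ := by
  have hprod (q : Fin n → ℤ) : ENNReal.ofReal (piPlus q ^ (-s)) =
      ∏ i, ENNReal.ofReal (max 1 |(q i : ℝ)| ^ (-s)) := by
    rw [piPlus_eq_prod_max, ← Real.finsetProd_rpow _ _ (fun i _ => by positivity),
      ENNReal.ofReal_prod_of_nonneg fun i _ => by positivity]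
  have hsum : Summable fun a : ℤ => max 1 |(a : ℝ)| ^ (-s) :=
    (Real.summable_abs_int_rpow hs).congr_cofinite <| (eventually_cofinite_ne 0).mono
      fun a ha => by dsimp only; rw [max_eq_right (mod_cast Int.one_le_abs ha)]
  rw [tsum_congr hprod,
    ENNReal.tsum_fin_pi_prod fun a : ℤ => ENNReal.ofReal (max 1 |(a : ℝ)| ^ (-s)),
    ← ENNReal.ofReal_tsum_of_nonneg (fun a => by positivity) hsum]
  exact ENNReal.pow_ne_top ENNReal.ofReal_ne_top

theorem vMultApprox_self {n : ℕ} (hn : n ≠ 0) (y : Fin n → ℝ) : vMultApprox n y := by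
  have i : Fin n := ⟨0, Nat.pos_of_ne_zero hn⟩
  refine ((Real.infinite_setOf_abs_mul_sub_round_lt_inv (y i)).image
    (f := fun k : ℕ => Pi.single i (k : ℤ)) fun k _ k' _ h => by simpa using congr_fun h i).mono ?_
  rintro _ ⟨k, ⟨hk₀, hk⟩, rfl⟩
  refine ⟨-round (k * y i), ?_⟩
  rw [piPlus_single i (by exact_mod_cast hk₀.ne'), div_self (by exact_mod_cast hn),
    Real.rpow_neg_one]
  simpa [Pi.single_apply, mul_comm, ← sub_eq_add_neg] using hk

theorem vMultApprox.mono {n : ℕ} {v v' : ℝ} {y : Fin n → ℝ} (h : vMultApprox v y) (hv : v' ≤ v) :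
    vMultApprox v' y := by
  refine Set.Infinite.mono ?_ h
  rintro q ⟨p, hp⟩
  exact ⟨p, hp.trans_le <| Real.rpow_le_rpow_of_exponent_le (one_le_piPlus q)
    (neg_le_neg (div_le_div_of_nonneg_right hv n.cast_nonneg))⟩

theorem volume_closedBall_inter_setOf_vMultApprox {n : ℕ} {v : ℝ} (hv : ((n + 1 : ℕ) : ℝ) < v)
    {R : ℝ} (hR : 0 ≤ R) :
    volume (closedBall (0 : Fin (n + 1) → ℝ) R ∩ {y | vMultApprox v y}) = 0 := by
  set σ := v / ((n + 1 : ℕ) : ℝ)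
  have hσ : 1 < σ := (one_lt_div (by positivity)).2 hv
  set s : (Fin (n + 1) → ℤ) → Set (Fin (n + 1) → ℝ) := fun q =>
    {y ∈ closedBall 0 R | q ≠ 0 ∧ ∃ p : ℤ, |∑ i, y i * q i + p| < piPlus q ^ (-σ)}
  have hs (q : Fin (n + 1) → ℤ) : volume (s q) ≤
      ENNReal.ofReal ((2 * R + 3) * 2 * (2 * R) ^ n) * ENNReal.ofReal (piPlus q ^ (-σ)) := by
    by_cases hq : q = 0
    · simp [s, hq]
    have hδ : piPlus q ^ (-σ) ≤ 1 :=
      Real.rpow_le_one_of_one_le_of_nonpos (one_le_piPlus q) (by linarith)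
    have hsub : s q ⊆ {y ∈ closedBall 0 R | ∃ p : ℤ, |∑ i, y i * q i + p| < piPlus q ^ (-σ)} := by
      rintro y ⟨hy, -, hp⟩
      exact ⟨hy, hp⟩
    have hδ₀ : 0 ≤ piPlus q ^ (-σ) := Real.rpow_nonneg (zero_le_one.trans (one_le_piPlus q)) _
    refine (measure_mono hsub).trans <|
      (volume_setOf_exists_int_abs_sum_mul_add_lt_le hq hR hδ₀ hδ).trans_eq ?_
    rw [← ENNReal.ofReal_mul' (pow_nonneg (by linarith) n), ← ENNReal.ofReal_mul' hδ₀]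
    ring_nf
  have hsum : ∑' q, volume (s q) ≠ ∞ :=
    ne_top_of_le_ne_top (ENNReal.mul_ne_top ENNReal.ofReal_ne_top
      (tsum_ofReal_piPlus_rpow_neg_ne_top _ hσ))
      (ENNReal.tsum_mul_left ▸ ENNReal.tsum_le_tsum hs)
  refine measure_mono_null ?_ (ae_iff.1 (ae_finite_setOfPred_mem hsum))
  rintro y ⟨hy, happ⟩ hfin
  exact happ.sdiff (finite_singleton 0) (hfin.subset fun q ⟨hq, hq0⟩ => ⟨hy, hq0, hq⟩)

theorem volume_setOf_vMultApprox {n : ℕ} {v : ℝ} (hv : n < v) :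
    volume {y : Fin n → ℝ | vMultApprox v y} = 0 := by
  cases n with
  | zero => simp [vMultApprox, Set.toFinite]
  | succ n =>
    refine measure_mono_null (fun y hy => ?_) (measure_iUnion_null fun R : ℕ =>
      volume_closedBall_inter_setOf_vMultApprox hv R.cast_nonneg)
    exact mem_iUnion.2 ⟨⌈‖y‖⌉₊, mem_closedBall_zero_iff.2 (Nat.le_ceil _), hy⟩

theorem ae_forall_not_vMultApprox (n : ℕ) :
    ∀ᵐ y : Fin n → ℝ, ∀ v : ℝ, n < v → ¬vMultApprox v y := by
  have hrat : ∀ᵐ y : Fin n → ℝ, ∀ r : ℚ, (n : ℝ) < r → ¬vMultApprox r y :=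
    ae_all_iff.2 fun r => by
      by_cases hr : (n : ℝ) < r
      · filter_upwards [measure_eq_zero_iff_ae_notMem.1 (volume_setOf_vMultApprox hr)]
          with y hy _ using hy
      · exact ae_of_all _ fun y h => absurd h hr
  filter_upwards [hrat] with y hy v hv happ
  obtain ⟨r, hnr, hrv⟩ := exists_rat_btwn hv
  exact hy r hnr (happ.mono hrv.le)

end DK

/-- for Lebesgue-a.e. `y ∈ ℝⁿ` one has `ω^×(y) = n`; that is, Lebesgue
measure on `ℝⁿ` is strongly extremal. -/
theorem stmt14 (n : ℕ) :
    (∀ᵐ y ∂(volume : Measure (Fin n → ℝ)), DK.diophExpMult y = (n : ℝ≥0∞)) ∧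
    DK.measDiophExpMult (volume : Measure (Fin n → ℝ)) = (n : ℝ≥0∞) := by
  have hn (h : 0 < (n : ℝ)) : n ≠ 0 := (Nat.cast_pos.1 h).ne'
  rw [← ENNReal.ofReal_natCast]
  refine ⟨?_, ?_⟩
  · filter_upwards [DK.ae_forall_not_vMultApprox n] with y hy
    exact sSup_setOf_ofReal_eq n.cast_nonneg hy fun h => DK.vMultApprox_self (hn h) y
  · refine sSup_setOf_ofReal_eq n.cast_nonneg
      (fun v hv hpos => hpos.ne' (DK.volume_setOf_vMultApprox hv)) fun h => ?_
    simpa [DK.vMultApprox_self (hn h)] using NeZero.ne _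
end
end

section
/- A vector y ∈ ℝ^n is badly approximable if and only if there exists ε > 0 such that for all t > 0 and all q ∈ ℤ^{n+1} \ {0}, ‖g_t u_y q‖ ≥ ε; that is, y ∈ BA if and only if the trajectory {g_t u_y ℤ^{n+1} : t > 0} stays away from lattices containing nonzero vectors of norm less than ε. -/
open MeasureTheory Metric Set Filter ENNReal

noncomputable section

/-!
The vector `g_t u_y (p, q)` has first coordinate `2^{nt} (p + y·q)` and remaining coordinates
`2^{-t} q`, so its sup norm is `max (2^{nt} |p + y·q|, 2^{-t} ‖q‖)`. If `|p + y·q| > c ‖q‖^{-n}`,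
then with `s = 2^{-t} ‖q‖` this is at least `max (c s^{-n}, s) ≥ min 1 c`. Conversely, for a given
`q` pick `t` with `2^{-t} ‖q‖ = ε / 2`: the lower bound `ε` on the norm then has to come from the
first coordinate, i.e. `|p + y·q| ≥ ε 2^{-nt} = ε (ε / 2)^n ‖q‖^{-n}`.
-/

theorem Fin.norm_eq_max_norm_zero_tail {E : Type*} [SeminormedAddCommGroup E] {n : ℕ}
    (v : Fin (n + 1) → E) : ‖v‖ = max ‖v 0‖ ‖Fin.tail v‖ := by
  refine le_antisymm ((pi_norm_le_iff_of_nonneg (by positivity)).2 fun i ↦ ?_) ?_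
  · cases i using Fin.cases with
    | zero => exact le_max_left _ _
    | succ i => exact (norm_le_pi_norm (Fin.tail v) i).trans (le_max_right _ _)
  · exact max_le (norm_le_pi_norm v 0)
      ((pi_norm_le_iff_of_nonneg (norm_nonneg v)).2 fun i ↦ norm_le_pi_norm v i.succ)

namespace DK

open Matrix Real

theorem one_le_inorm {m : ℕ} {q : Fin m → ℤ} (hq : q ≠ 0) : 1 ≤ inorm q := by
  obtain ⟨i, hi⟩ := Function.ne_iff.mp hq
  calc (1 : ℝ) ≤ |(q i : ℝ)| := by exact_mod_cast Int.one_le_abs hi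
    _ ≤ inorm q := by simpa [inorm] using norm_le_pi_norm (fun j ↦ (q j : ℝ)) i

theorem uMat_mulVec_zero {n : ℕ} (y : Fin n → ℝ) (v : Fin (n + 1) → ℝ) :
    (uMat y *ᵥ v) 0 = v 0 + ∑ j, y j * v j.succ := by
  simp [uMat, mulVec, dotProduct, Fin.sum_univ_succ, Fin.succ_ne_zero]

theorem uMat_mulVec_succ {n : ℕ} (y : Fin n → ℝ) (v : Fin (n + 1) → ℝ) (i : Fin n) :
    (uMat y *ᵥ v) i.succ = v i.succ := by
  simp [uMat, mulVec, dotProduct, Fin.succ_ne_zero, Finset.sum_ite_eq']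

theorem latNorm_eq_max {n : ℕ} (t : ℝ) (y : Fin n → ℝ) (q : Fin (n + 1) → ℤ) :
    latNorm t y q = max (2 ^ ((n : ℝ) * t) * |q 0 + ∑ j, y j * q j.succ|)
      (2 ^ (-t) * inorm (Fin.tail q)) := by
  rw [latNorm, ← mulVec_mulVec, Fin.norm_eq_max_norm_zero_tail, gMat, mulVec_diagonal]
  congr 1
  · simp [uMat_mulVec_zero, rpow_nonneg]
  · conv_rhs => rw [inorm, ← Real.norm_of_nonneg (by positivity : (0 : ℝ) ≤ 2 ^ (-t)),
      ← norm_smul]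
    congr 1
    ext i
    simp [Fin.tail, mulVec_diagonal, uMat_mulVec_succ, -mulVec_mulVec]

theorem min_one_le_max_mul_rpow_neg {c s r : ℝ} (hc : 0 ≤ c) (hs : 0 < s) (hr : 0 ≤ r) :
    min 1 c ≤ max (c * s ^ (-r)) s := by
  rcases le_or_gt 1 s with hs1 | hs1
  · exact (min_le_left _ _).trans (hs1.trans (le_max_right _ _))
  · have : 1 ≤ s ^ (-r) := one_le_rpow_of_pos_of_le_one_of_nonpos hs hs1.le (neg_nonpos.2 hr)
    exact (min_le_right _ _).trans ((le_mul_of_one_le_right hc this).trans (le_max_left _ _))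

theorem exists_forall_le_latNorm_of_badlyApprox {n : ℕ} {y : Fin n → ℝ} (hy : BadlyApprox y) :
    ∃ ε > 0, ∀ t : ℝ, 0 ≤ t → ∀ q : Fin (n + 1) → ℤ, q ≠ 0 → ε ≤ latNorm t y q := by
  obtain ⟨c, hc, hbad⟩ := hy
  refine ⟨min 1 c, lt_min one_pos hc, fun t ht q hq ↦ ?_⟩
  rw [latNorm_eq_max]
  by_cases htail : Fin.tail q = 0
  · have hq0 : q 0 ≠ 0 := fun h0 ↦ hq <| by
      rw [← Fin.cons_self_tail q, h0, htail]
      exact Matrix.cons_zero_zero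
    have hsum : ∑ j, y j * (q j.succ : ℝ) = 0 :=
      Finset.sum_eq_zero fun j _ ↦ by simp [show q j.succ = 0 from congr_fun htail j]
    calc min 1 c ≤ 1 * 1 := by simp
      _ ≤ 2 ^ ((n : ℝ) * t) * |(q 0 : ℝ) + ∑ j, y j * q j.succ| := by
        rw [hsum, add_zero]
        gcongr
        · exact one_le_rpow one_le_two (by positivity)
        · exact_mod_cast Int.one_le_abs hq0
      _ ≤ _ := le_max_left _ _
  · set Q := inorm (Fin.tail q)
    have hQ : 0 < Q := one_pos.trans_le (one_le_inorm htail)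
    have hscale : (2 ^ (-t) * Q) ^ (-(n : ℝ)) = 2 ^ ((n : ℝ) * t) * Q ^ (-(n : ℝ)) := by
      rw [mul_rpow (by positivity) hQ.le, ← rpow_mul zero_le_two, neg_mul_neg,
        mul_comm t]
    have hfirst : c * (2 ^ (-t) * Q) ^ (-(n : ℝ)) < 2 ^ ((n : ℝ) * t) *
        |(q 0 : ℝ) + ∑ j, y j * q j.succ| := by
      rw [hscale, mul_left_comm, add_comm]
      exact mul_lt_mul_of_pos_left (hbad _ htail (q 0)) (rpow_pos_of_pos two_pos _)
    exact (min_one_le_max_mul_rpow_neg hc.le (by positivity) (Nat.cast_nonneg n)).trans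
      (max_le_max hfirst.le le_rfl)

theorem badlyApprox_of_forall_le_latNorm {n : ℕ} {y : Fin n → ℝ} {ε : ℝ} (hε : 0 < ε)
    (hε1 : ε ≤ 1)
    (H : ∀ t : ℝ, 0 < t → ∀ q : Fin (n + 1) → ℤ, q ≠ 0 → ε ≤ latNorm t y q) :
    BadlyApprox y := by
  refine ⟨ε * (2 / ε) ^ (-(n : ℝ)) / 2, by positivity, fun q hq p ↦ ?_⟩
  set Q := inorm q
  have hQ : 1 ≤ Q := one_le_inorm hq
  set T := 2 / ε * Q
  have hT : 1 < T := by
    have : 2 ≤ 2 / ε := by rwa [le_div_iff₀ hε, mul_le_iff_le_one_right two_pos]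
    nlinarith
  set t := logb 2 T
  have h2t : 2 ^ t = T := rpow_logb two_pos (by norm_num) (by linarith)
  have hlat := H t (logb_pos one_lt_two hT) (Fin.cons p q) (Matrix.cons_nonzero_iff.2 (Or.inr hq))
  rw [latNorm_eq_max] at hlat
  simp only [Fin.cons_zero, Fin.tail_cons, Fin.cons_succ] at hlat
  have hTε : T * ε = 2 * Q := by simp only [T]; field_simp
  have htail : 2 ^ (-t) * Q < ε := by
    rw [rpow_neg zero_le_two, h2t, inv_mul_lt_iff₀ (by linarith), hTε]
    linarith
  have hfirst : ε ≤ T ^ (n : ℝ) * |∑ i, y i * q i + p| := by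
    rw [← h2t, ← rpow_mul zero_le_two, mul_comm t, add_comm]
    exact (le_max_iff.1 hlat).resolve_right htail.not_ge
  calc ε * (2 / ε) ^ (-(n : ℝ)) / 2 * Q ^ (-(n : ℝ)) < ε * T ^ (-(n : ℝ)) := by
        have : 0 < ε * (2 / ε) ^ (-(n : ℝ)) * Q ^ (-(n : ℝ)) := by positivity
        rw [mul_rpow (by positivity) (by positivity)]
        linarith
    _ ≤ |∑ i, y i * q i + p| := by
        rw [rpow_neg (by positivity), ← div_eq_mul_inv, div_le_iff₀ (by positivity), mul_comm]
        exact hfirst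

end DK

/-- Dani correspondence: `y ∈ ℝⁿ` is badly approximable iff there is
`ε > 0` such that `‖g_t u_y q‖ ≥ ε` for all `t > 0` and all `q ∈ ℤ^{n+1} \ {0}`. -/
theorem stmt17 {n : ℕ} (y : Fin n → ℝ) :
    DK.BadlyApprox y ↔
      ∃ ε > (0 : ℝ), ∀ t : ℝ, 0 < t → ∀ q : Fin (n + 1) → ℤ, q ≠ 0 →
        ε ≤ DK.latNorm t y q := by
  constructor
  · intro hy
    obtain ⟨ε, hε, H⟩ := DK.exists_forall_le_latNorm_of_badlyApprox hy
    exact ⟨ε, hε, fun t ht ↦ H t ht.le⟩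
  · rintro ⟨ε, hε, H⟩
    exact DK.badlyApprox_of_forall_le_latNorm (lt_min hε one_pos) (min_le_right _ _)
      fun t ht q hq ↦ (min_le_left _ _).trans (H t ht q hq)
end
end
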